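/- arXiv:1112.2606 — 4 statements merged into one kernel-verified Lean document; each statement's English description precedes it below -/
import Mathlib

section
/- The product defined on the vector space with basis (e_i)_{i≥1} by e_i ∘ e_j = (λj − μ)e_{i+j}, for fixed scalars λ, μ in a field K of characteristic zero, is left pre-Lie: for all x, y, z, (x∘y)∘z − x∘(y∘z) = (y∘x)∘z − y∘(x∘z). -/
/-!
In the commutative non-unital algebra `K[ℕ+]` (where `e_i e_j = e_{i+j}`) the product reads
`x ∘ y = x · T y` with `T e_j = (λ j - μ) e_j`. The operator `T` obeys the twisted Leibniz rule
`T (a b) = T a · b + a · (T b + μ b)`, so the associator `(x ∘ y) ∘ z - x ∘ (y ∘ z)` equals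
`-x y (T + μ)(T z)`, which is symmetric in `x` and `y`.
-/

/-- The vector space with basis `(e_i)_{i ≥ 1}` (realized as `ℕ+ →₀ K`), equipped with the
bilinear product determined on basis elements by `e_i ∘ e_j = (λ j - μ) e_{i+j}`. -/
noncomputable def fdbMul (K : Type*) [Field K] (lam mu : K) (x y : ℕ+ →₀ K) : ℕ+ →₀ K :=
  x.sum fun i a => y.sum fun j b => Finsupp.single (i + j) (a * b * (lam * ((j : ℕ) : K) - mu))

theorem leftPreLie_mul_map_of_twisted_leibniz {A : Type*} [NonUnitalCommRing A] (T D : A → A)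
    (hT : ∀ a b, T (a * b) = T a * b + a * D b) (x y z : A) :
    x * T y * T z - x * T (y * T z) = y * T x * T z - y * T (x * T z) := by
  have associator : ∀ a b, a * T b * T z - a * T (b * T z) = -(a * b * D (T z)) := fun a b => by
    rw [hT, mul_add, ← mul_assoc, ← mul_assoc, sub_add_cancel_left]
  rw [associator, associator, mul_comm x y]

open AddMonoidAlgebra

namespace AddMonoidAlgebra

variable {K : Type*} [Field K] (lam mu : K)

noncomputable def shiftedEuler (x : K[ℕ+]) : K[ℕ+] :=
  x.coeff.sum fun j b => single j (b * (lam * ((j : ℕ) : K) - mu))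

theorem shiftedEuler_single (j : ℕ+) (b : K) :
    shiftedEuler lam mu (single j b) = single j (b * (lam * ((j : ℕ) : K) - mu)) := by
  simp [shiftedEuler]

theorem shiftedEuler_add (x y : K[ℕ+]) :
    shiftedEuler lam mu (x + y) = shiftedEuler lam mu x + shiftedEuler lam mu y := by
  simp only [shiftedEuler, coeff_add]
  exact Finsupp.sum_add_index' (by simp) fun _ _ _ => by simp [add_mul]

theorem shiftedEuler_mul (x y : K[ℕ+]) :
    shiftedEuler lam mu (x * y) =
      shiftedEuler lam mu x * y + x * (shiftedEuler lam mu y + mu • y) := by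
  induction x using AddMonoidAlgebra.induction_linear with
  | zero => simp [shiftedEuler]
  | add x x' hx hx' => simp only [add_mul, shiftedEuler_add, hx, hx']; abel
  | single i a =>
    induction y using AddMonoidAlgebra.induction_linear with
    | zero => simp [shiftedEuler]
    | add y y' hy hy' => simp only [mul_add, shiftedEuler_add, hy, hy', smul_add]; abel
    | single j b =>
      simp only [single_mul_single, shiftedEuler_single, smul_single, ← single_add]
      congr 1
      push_cast
      ring

end AddMonoidAlgebra

theorem fdbMul_eq_coeff_mul_shiftedEuler {K : Type*} [Field K] (lam mu : K) (x y : ℕ+ →₀ K) :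
    fdbMul K lam mu x y = (ofCoeff x * shiftedEuler lam mu (ofCoeff y)).coeff := by
  simp only [fdbMul, mul_def, shiftedEuler, coeff_finsuppSum, coeff_single]
  refine Finsupp.sum_congr fun i _ => ?_
  rw [Finsupp.sum_sum_index (by simp) (by simp [mul_add])]
  refine Finsupp.sum_congr fun j _ => ?_
  rw [Finsupp.sum_single_index (by simp), mul_assoc]

theorem fdbMul_leftPreLie_general (K : Type*) [Field K] (lam mu : K)
    (x y z : ℕ+ →₀ K) :
    fdbMul K lam mu (fdbMul K lam mu x y) z - fdbMul K lam mu x (fdbMul K lam mu y z) =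
      fdbMul K lam mu (fdbMul K lam mu y x) z - fdbMul K lam mu y (fdbMul K lam mu x z) := by
  simp only [fdbMul_eq_coeff_mul_shiftedEuler, ofCoeff_coeff, ← coeff_sub]
  rw [leftPreLie_mul_map_of_twisted_leibniz _ _ (shiftedEuler_mul lam mu)]

/-- The product `e_i ∘ e_j = (λ j − μ) e_{i+j}` is left pre-Lie:
`(x∘y)∘z − x∘(y∘z) = (y∘x)∘z − y∘(x∘z)`. -/
theorem fdbMul_leftPreLie (K : Type*) [Field K] [CharZero K] (lam mu : K)
    (x y z : ℕ+ →₀ K) :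
    fdbMul K lam mu (fdbMul K lam mu x y) z - fdbMul K lam mu x (fdbMul K lam mu y z) =
      fdbMul K lam mu (fdbMul K lam mu y x) z - fdbMul K lam mu y (fdbMul K lam mu x z) :=
  fdbMul_leftPreLie_general K lam mu x y z
end

section
/- In the Faà di Bruno pre-Lie algebra with product e_i ∘ e_j = (λj − μ)e_{i+j}, the extended product on the symmetric algebra satisfies (e_{i_1} ⋯ e_{i_m}) ∘ e_j = (λj − μ)(λj)(λj + μ) ⋯ (λj + (m−2)μ) e_{i_1+⋯+i_m+j} for all m ≥ 1. -/
/-!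
Induct on `m`, writing the monomial as `e_{i₁} a`. The rule `(xa)∘b = x∘(a∘b) − (x∘a)∘b` splits
`(e_{i₁} a)∘e_j` into two terms. Since `x∘−` is a derivation of `S(g)`, `e_{i₁}∘a` is a combination
of monomials of the same degree and total weight as `a`, whose coefficients add up to
`λ wt(a) − (m−1)μ`; so by induction both terms are multiples of `e_{i₁+⋯+i_m+j}`, and their
coefficients differ by exactly the new factor `λj + (m−2)μ`.
-/

open MvPolynomial

theorem map_prod_eq_sum_of_leibniz {ι A : Type*} [CommRing A] [DecidableEq ι] (D : A → A)
    (hD : ∀ b c, D (b * c) = D b * c + b * D c) (s : Finset ι) (f : ι → A) :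
    D (∏ i ∈ s, f i) = ∑ i ∈ s, (∏ l ∈ s.erase i, f l) * D (f i) := by
  induction s using Finset.induction_on with
  | empty =>
    have h := hD 1 1
    simp only [mul_one, one_mul, left_eq_add] at h
    simp [h]
  | insert a s ha ih =>
    rw [Finset.prod_insert ha, hD, ih, Finset.sum_insert ha, Finset.erase_insert ha,
      Finset.mul_sum]
    congr 1
    · ring
    · refine Finset.sum_congr rfl fun i hi => ?_
      rw [Finset.erase_insert_of_ne (ne_of_mem_of_not_mem hi ha).symm,
        Finset.prod_insert fun h => ha (Finset.mem_of_mem_erase h)]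
      ring

theorem sum_update_add_self {ι M : Type*} [AddCommMonoid M] [DecidableEq ι] [Fintype ι]
    (f : ι → M) (k : ι) (a : M) :
    ∑ l, Function.update f k (a + f k) l = a + ∑ l, f l := by
  rw [Finset.sum_update_of_mem (Finset.mem_univ k),
    ← Finset.add_sum_erase _ _ (Finset.mem_univ k), Finset.sdiff_singleton_eq_erase, add_assoc]

theorem prod_erase_mul_eq_prod_update {ι A : Type*} [CommMonoid A] [DecidableEq ι] [Fintype ι]
    (f : ι → A) (k : ι) (b : A) :
    (∏ l ∈ Finset.univ.erase k, f l) * b = ∏ l, Function.update f k b l := by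
  rw [Finset.prod_update_of_mem (Finset.mem_univ k), Finset.sdiff_singleton_eq_erase, mul_comm]

section FaaDiBruno

variable {K : Type*} [CommRing K] (lam mu : K)
  (mul : MvPolynomial ℕ+ K →ₗ[K] MvPolynomial ℕ+ K →ₗ[K] MvPolynomial ℕ+ K)

theorem mul_X_prod_X
    (hXX : ∀ i j : ℕ+, mul (X i) (X j) = (lam * ((j : ℕ) : K) - mu) • X (i + j))
    (hLeib : ∀ (i : ℕ+) (b c : MvPolynomial ℕ+ K),
      mul (X i) (b * c) = mul (X i) b * c + b * mul (X i) c)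
    {m : ℕ} (e : Fin m → ℕ+) (i : ℕ+) :
    mul (X i) (∏ k, X (e k)) =
      ∑ k, (lam * ((e k : ℕ) : K) - mu) • ∏ l, X (Function.update e k (i + e k) l) := by
  rw [map_prod_eq_sum_of_leibniz _ (hLeib i)]
  refine Finset.sum_congr rfl fun k _ => ?_
  rw [hXX, mul_smul_comm, prod_erase_mul_eq_prod_update]
  simp only [Function.apply_update (fun _ => (X : ℕ+ → MvPolynomial ℕ+ K))]

theorem mul_prod_X_X (hone : ∀ b, mul 1 b = b)
    (hXX : ∀ i j : ℕ+, mul (X i) (X j) = (lam * ((j : ℕ) : K) - mu) • X (i + j))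
    (hXa : ∀ (i : ℕ+) (a b : MvPolynomial ℕ+ K),
      mul (X i * a) b = mul (X i) (mul a b) - mul (mul (X i) a) b)
    (hLeib : ∀ (i : ℕ+) (b c : MvPolynomial ℕ+ K),
      mul (X i) (b * c) = mul (X i) b * c + b * mul (X i) c)
    (m : ℕ) (e : Fin m → ℕ+) (j n : ℕ+) (hn : (n : ℕ) = ∑ k, (e k : ℕ) + j) :
    mul (∏ k, X (e k)) (X j) =
      (∏ k ∈ Finset.range m, (lam * ((j : ℕ) : K) + ((k : K) - 1) * mu)) • X n := by
  induction m generalizing n with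
  | zero =>
    obtain rfl : n = j := PNat.eq (by simpa using hn)
    simp [hone]
  | succ m ih =>
    set P := ∏ k ∈ Finset.range m, (lam * ((j : ℕ) : K) + ((k : K) - 1) * mu)
    set s := ∑ k : Fin m, (e k.succ : ℕ)
    have hsum : ∑ k, (e k : ℕ) = e 0 + s := Fin.sum_univ_succ _
    have outer : mul (X (e 0)) (mul (∏ k : Fin m, X (e k.succ)) (X j)) =
        (P * (lam * ((s + j : ℕ) : K) - mu)) • X n := by
      obtain ⟨n', hn'⟩ : ∃ n' : ℕ+, (n' : ℕ) = s + j := ⟨(s + j).toPNat (by positivity), rfl⟩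
      rw [ih (fun k => e k.succ) n' hn', map_smul, hXX, smul_smul, hn']
      congr 2
      exact PNat.eq (by simp [hn, hn', hsum, add_assoc])
    have inner : mul (mul (X (e 0)) (∏ k : Fin m, X (e k.succ))) (X j) =
        ((lam * (s : K) - m * mu) * P) • X n := by
      rw [mul_X_prod_X lam mu mul hXX hLeib, map_sum, LinearMap.sum_apply]
      simp only [map_smul, LinearMap.smul_apply]
      have weight : ∀ k : Fin m, (n : ℕ) =
          ∑ l, (Function.update (fun l : Fin m => e l.succ) k (e 0 + e k.succ) l : ℕ) + j := by
        intro k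
        simp only [Function.apply_update (fun _ => ((↑) : ℕ+ → ℕ)), PNat.add_coe,
          sum_update_add_self, hn, hsum, add_assoc, s]
      simp only [ih _ n (weight _), smul_smul, ← Finset.sum_smul, ← Finset.sum_mul]
      congr 2
      simp only [s, Finset.sum_sub_distrib, ← Finset.mul_sum, Nat.cast_sum, Finset.sum_const,
        Finset.card_univ, Fintype.card_fin, nsmul_eq_mul]
    rw [Fin.prod_univ_succ, hXa, outer, inner, ← sub_smul, Finset.prod_range_succ]
    congr 1
    push_cast
    ring

end FaaDiBruno

-- `S(g)` is modelled as `MvPolynomial ℕ+ K`, with `e_i = X i`.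
/-- In the Faà di Bruno pre-Lie algebra `g` with basis `(e_i)_{i≥1}` and product
`e_i ∘ e_j = (λ j − μ) e_{i+j}`, the product extended to the symmetric algebra
`S(g)` (realized as `MvPolynomial ℕ+ K`, with `e_i = X i`) by the Oudom–Guin rules
satisfies `(e_{i_1} ⋯ e_{i_m}) ∘ e_j = (λj − μ)(λj)(λj + μ) ⋯ (λj + (m−2)μ) e_{i_1+⋯+i_m+j}`
for all `m ≥ 1`. -/
theorem fdb_symmAlg_prod (K : Type*) [Field K] (lam mu : K)
    (mul : MvPolynomial ℕ+ K →ₗ[K] MvPolynomial ℕ+ K →ₗ[K] MvPolynomial ℕ+ K)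
    -- Oudom–Guin rules (for `b` a generator and consequences of the coproduct rule):
    (hone : ∀ b, mul 1 b = b)
    (hXX : ∀ i j : ℕ+, mul (X i) (X j) = (lam * ((j : ℕ) : K) - mu) • X (i + j))
    (hXa : ∀ (i : ℕ+) (a b : MvPolynomial ℕ+ K),
      mul (X i * a) b = mul (X i) (mul a b) - mul (mul (X i) a) b)
    (hLeib : ∀ (i : ℕ+) (b c : MvPolynomial ℕ+ K),
      mul (X i) (b * c) = mul (X i) b * c + b * mul (X i) c)
    (m : ℕ) (e : Fin m → ℕ+) (j : ℕ+) :
    mul (∏ k, X (e k)) (X j) =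
      (∏ k ∈ Finset.range m, (lam * ((j : ℕ) : K) + ((k : K) - 1) * mu)) •
        X (⟨(∑ k, ((e k : ℕ))) + (j : ℕ), by exact Nat.add_pos_right _ j.2⟩ : ℕ+) :=
  mul_prod_X_X lam mu mul hone hXX hXa hLeib m e j _ rfl
end

section
/- Consider the Dyson–Schwinger equation x = Σ_{j∈J, m|j} B_j(1 + αx) + Σ_{j∈J, m∤j} B_j(1) in (the completion of) the Connes–Kreimer Hopf algebra of rooted trees decorated by J ⊆ ℕ*, where m ≥ 1 is such that the elements of J divisible by m generate mℤ and no element of J not divisible by m is divisible by m. Then the unique solution x = Σ_n x(n) satisfies Δ(x(n)) = x(n)⊗1 + 1⊗x(n) + α Σ_{1≤k≤n−1, m|k} x(n−k)⊗x(k); in particular the subalgebra generated by the x(n) is a Hopf subalgebra. -/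
/-!
Strong induction on the degree. By the cocycle property of `B_j` and the induction hypothesis
for `x (n - j)` (note `j > 0`), `Δ(B_j(x(n-j)))` is primitive up to the cross terms
`x(n-j) ⊗ B_j(1) + α Σ_{m ∣ l} x(n-j-l) ⊗ B_j(x(l))`. Expanding the second factor of
`Σ_{m ∣ k} x(n-k) ⊗ x(k)` by the equation produces the same cross terms after the change of
variables `k = j + l`, which respects divisibility by `m` because `m ∣ j`.
-/

open TensorProduct Finset

theorem TensorProduct.tmul_mem_range_mapIncl {R M N : Type*} [CommSemiring R]
    [AddCommMonoid M] [AddCommMonoid N] [Module R M] [Module R N]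
    {p : Submodule R M} {q : Submodule R N} {a : M} {b : N} (ha : a ∈ p) (hb : b ∈ q) :
    a ⊗ₜ[R] b ∈ LinearMap.range (mapIncl p q) := by
  rw [range_mapIncl]
  exact Submodule.apply_mem_map₂ _ ha hb

theorem Finset.sum_filter_Ioo_eq_sum_filter_range {M : Type*} [AddCommMonoid M] {f : ℕ → M}
    {n : ℕ} (p : ℕ → Prop) [DecidablePred p] (h0 : f 0 = 0) (hn : f n = 0) :
    ∑ k ∈ (Ioo 0 n).filter p, f k = ∑ k ∈ (range (n + 1)).filter p, f k := by
  refine sum_subset (fun k hk => ?_) (fun k hk hk' => ?_)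
  · simp only [mem_filter, mem_Ioo, mem_range] at hk ⊢
    exact ⟨by omega, hk.2⟩
  · simp only [mem_filter, mem_Ioo, mem_range, not_and] at hk hk'
    obtain rfl | rfl : k = 0 ∨ k = n := by
      by_contra! h
      exact hk' ⟨by omega, by omega⟩ hk.2
    exacts [h0, hn]

theorem Finset.sum_filter_dvd_range_diag_flip {M : Type*} [AddCommMonoid M] {m : ℕ}
    {p : ℕ → Prop} [DecidablePred p] (hp : ∀ j, p j → m ∣ j) (n : ℕ) (g : ℕ → ℕ → M) :
    ∑ k ∈ (range (n + 1)).filter (m ∣ ·), ∑ j ∈ (range (k + 1)).filter p, g j (k - j) =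
      ∑ j ∈ (range (n + 1)).filter p, ∑ l ∈ (range (n - j + 1)).filter (m ∣ ·), g j l := by
  rw [sum_comm' (t' := (range (n + 1)).filter p) (s' := fun j => (Icc j n).filter (m ∣ ·))]
  · refine sum_congr rfl fun j hj => ?_
    obtain ⟨hjn, hjm⟩ : j < n + 1 ∧ m ∣ j := by
      rw [mem_filter, mem_range] at hj
      exact ⟨hj.1, hp j hj.2⟩
    refine sum_nbij' (· - j) (j + ·) (fun k hk => ?_) (fun l hl => ?_) (fun k hk => ?_)
      (fun l hl => ?_) (fun k hk => rfl)
    · simp only [mem_filter, mem_Icc, mem_range] at hk ⊢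
      exact ⟨by omega, (Nat.dvd_sub_iff_left hk.1.1 hjm).2 hk.2⟩
    · simp only [mem_filter, mem_Icc, mem_range] at hl ⊢
      exact ⟨by omega, (Nat.dvd_add_right hjm).2 hl.2⟩
    · simp only [mem_filter, mem_Icc] at hk
      omega
    · omega
  · intro k j
    simp only [mem_filter, mem_range, mem_Icc]
    constructor
    · rintro ⟨⟨hkn, hk⟩, hjk, hj⟩
      exact ⟨⟨⟨by omega, by omega⟩, hk⟩, by omega, hj⟩
    · rintro ⟨⟨⟨hjk, hkn⟩, hk⟩, hjn, hj⟩
      exact ⟨⟨by omega, hk⟩, by omega, hj⟩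

section Bialgebra

variable {K H : Type*} [CommSemiring K] [Semiring H] [Bialgebra K H]

def IsOneCocycle (B : H →ₗ[K] H) : Prop :=
  ∀ y, Coalgebra.comul (R := K) (B y) =
    B y ⊗ₜ[K] 1 + TensorProduct.map LinearMap.id B (Coalgebra.comul (R := K) y)

theorem IsOneCocycle.comul_apply_one {B : H →ₗ[K] H} (hB : IsOneCocycle B) :
    Coalgebra.comul (R := K) (B 1) = B 1 ⊗ₜ[K] 1 + 1 ⊗ₜ[K] B 1 := by
  rw [hB, Bialgebra.comul_one, Algebra.TensorProduct.one_def, map_tmul, LinearMap.id_apply]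

theorem IsOneCocycle.comul_apply_of_comul_eq {B : H →ₗ[K] H} (hB : IsOneCocycle B) {ι : Type*}
    {s : Finset ι} {a b : ι → H} {α : K} {y : H}
    (hy : Coalgebra.comul (R := K) y = y ⊗ₜ[K] 1 + 1 ⊗ₜ[K] y + α • ∑ i ∈ s, a i ⊗ₜ[K] b i) :
    Coalgebra.comul (R := K) (B y) =
      B y ⊗ₜ[K] 1 + y ⊗ₜ[K] B 1 + 1 ⊗ₜ[K] B y + α • ∑ i ∈ s, a i ⊗ₜ[K] B (b i) := by
  simp only [hB y, hy, map_add, map_smul, map_sum, map_tmul, LinearMap.id_apply, add_assoc]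

/-- The degree-`n` component of `x = Σ_{j ∈ J, m ∣ j} B_j(1 + αx) + Σ_{j ∈ J, m ∤ j} B_j(1)`,
where `B_j` raises degrees by `j`. -/
def IsDSESolution (α : K) (m : ℕ) (J : Set ℕ) [DecidablePred (· ∈ J)] (B : ℕ → H →ₗ[K] H)
    (x : ℕ → H) : Prop :=
  ∀ n, x n = (if n ∈ J then B n 1 else 0) +
    α • ∑ j ∈ (range (n + 1)).filter (fun j => j ∈ J ∧ m ∣ j), B j (x (n - j))

variable {α : K} {m : ℕ} {J : Set ℕ} [DecidablePred (· ∈ J)] {B : ℕ → H →ₗ[K] H} {x : ℕ → H}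

theorem IsDSESolution.of_one_le (hJpos : ∀ n ∈ J, 0 < n) (hx0 : x 0 = 0)
    (hx : ∀ n, 1 ≤ n → x n = (if n ∈ J then B n 1 else 0) +
      α • ∑ j ∈ (range (n + 1)).filter (fun j => j ∈ J ∧ m ∣ j), B j (x (n - j))) :
    IsDSESolution α m J B x := by
  intro n
  rcases Nat.eq_zero_or_pos n with rfl | hn
  · have h0J : 0 ∉ J := fun h => (hJpos 0 h).false
    simp [hx0, h0J]
  · exact hx n hn

theorem IsDSESolution.sum_filter_dvd_tmul_eq (hx : IsDSESolution α m J B x) (n : ℕ) :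
    ∑ k ∈ (range (n + 1)).filter (m ∣ ·), x (n - k) ⊗ₜ[K] x k =
      ∑ j ∈ (range (n + 1)).filter (fun j => j ∈ J ∧ m ∣ j),
        (x (n - j) ⊗ₜ[K] B j 1 + α • ∑ l ∈ (range (n - j + 1)).filter (m ∣ ·),
          x (n - j - l) ⊗ₜ[K] B j (x l)) := by
  have hconst : ∑ k ∈ (range (n + 1)).filter (m ∣ ·),
      x (n - k) ⊗ₜ[K] (if k ∈ J then B k 1 else 0) =
      ∑ j ∈ (range (n + 1)).filter (fun j => j ∈ J ∧ m ∣ j), x (n - j) ⊗ₜ[K] B j 1 := by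
    simp only [tmul_ite, ← sum_filter, filter_filter, and_comm]
  have hcross : ∑ k ∈ (range (n + 1)).filter (m ∣ ·), ∑ j ∈ (range (k + 1)).filter
      (fun j => j ∈ J ∧ m ∣ j), x (n - k) ⊗ₜ[K] B j (x (k - j)) =
      ∑ j ∈ (range (n + 1)).filter (fun j => j ∈ J ∧ m ∣ j),
        ∑ l ∈ (range (n - j + 1)).filter (m ∣ ·), x (n - j - l) ⊗ₜ[K] B j (x l) := by
    rw [← sum_filter_dvd_range_diag_flip (fun j hj => hj.2) n
      (fun j l => x (n - j - l) ⊗ₜ[K] B j (x l))]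
    refine sum_congr rfl fun k hk => sum_congr rfl fun j hj => ?_
    rw [mem_filter, mem_range] at hj
    rw [Nat.sub_sub, Nat.add_sub_cancel' (by omega)]
  conv_lhs => enter [2, k]; rw [hx k]
  simp only [tmul_add, tmul_smul, tmul_sum, sum_add_distrib, ← smul_sum, hconst, hcross]

theorem IsDSESolution.comul_eq (hx : IsDSESolution α m J B x) (hB : ∀ j ∈ J, IsOneCocycle (B j))
    (hJpos : ∀ n ∈ J, 0 < n) (n : ℕ) :
    Coalgebra.comul (R := K) (x n) = x n ⊗ₜ[K] 1 + 1 ⊗ₜ[K] x n +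
      α • ∑ k ∈ (range (n + 1)).filter (m ∣ ·), x (n - k) ⊗ₜ[K] x k := by
  induction n using Nat.strong_induction_on with
  | _ n ih =>
  have hgraft : ∀ j ∈ (range (n + 1)).filter (fun j => j ∈ J ∧ m ∣ j),
      Coalgebra.comul (R := K) (B j (x (n - j))) =
        B j (x (n - j)) ⊗ₜ[K] 1 + 1 ⊗ₜ[K] B j (x (n - j)) +
          (x (n - j) ⊗ₜ[K] B j 1 + α • ∑ l ∈ (range (n - j + 1)).filter (m ∣ ·),
            x (n - j - l) ⊗ₜ[K] B j (x l)) := by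
    intro j hj
    rw [mem_filter, mem_range] at hj
    rw [(hB j hj.2.1).comul_apply_of_comul_eq (ih (n - j) (by have := hJpos j hj.2.1; omega))]
    abel
  have hprimitive : Coalgebra.comul (R := K) (if n ∈ J then B n 1 else 0) =
      (if n ∈ J then B n 1 else 0) ⊗ₜ[K] 1 + 1 ⊗ₜ[K] (if n ∈ J then B n 1 else 0) := by
    split_ifs with hn
    · exact (hB n hn).comul_apply_one
    · simp
  calc Coalgebra.comul (R := K) (x n)
      = Coalgebra.comul (R := K) ((if n ∈ J then B n 1 else 0) +
          α • ∑ j ∈ (range (n + 1)).filter (fun j => j ∈ J ∧ m ∣ j), B j (x (n - j))) := by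
        rw [← hx n]
    _ = (if n ∈ J then B n 1 else 0) ⊗ₜ[K] 1 + 1 ⊗ₜ[K] (if n ∈ J then B n 1 else 0) +
          α • ∑ j ∈ (range (n + 1)).filter (fun j => j ∈ J ∧ m ∣ j),
            (B j (x (n - j)) ⊗ₜ[K] 1 + 1 ⊗ₜ[K] B j (x (n - j)) +
              (x (n - j) ⊗ₜ[K] B j 1 + α • ∑ l ∈ (range (n - j + 1)).filter (m ∣ ·),
                x (n - j - l) ⊗ₜ[K] B j (x l))) := by
        rw [map_add, map_smul, map_sum, hprimitive, sum_congr rfl hgraft]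
    _ = (if n ∈ J then B n 1 else 0) ⊗ₜ[K] 1 + 1 ⊗ₜ[K] (if n ∈ J then B n 1 else 0) +
          α • ∑ j ∈ (range (n + 1)).filter (fun j => j ∈ J ∧ m ∣ j),
            (B j (x (n - j)) ⊗ₜ[K] 1 + 1 ⊗ₜ[K] B j (x (n - j))) +
          α • ∑ k ∈ (range (n + 1)).filter (m ∣ ·), x (n - k) ⊗ₜ[K] x k := by
        rw [hx.sum_filter_dvd_tmul_eq, sum_add_distrib, smul_add]
        abel
    _ = x n ⊗ₜ[K] 1 + 1 ⊗ₜ[K] x n +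
          α • ∑ k ∈ (range (n + 1)).filter (m ∣ ·), x (n - k) ⊗ₜ[K] x k := by
        rw [hx n]
        simp only [add_tmul, tmul_add, ← smul_tmul', tmul_smul, sum_tmul, tmul_sum, smul_add,
          sum_add_distrib]
        abel

end Bialgebra

theorem DSE_solution_comul_general (K : Type*) [Field K]
    (H : Type*) [CommRing H] [HopfAlgebra K H]
    (α : K) (m : ℕ)
    (J : Set ℕ) [DecidablePred (· ∈ J)]
    (hJpos : ∀ n ∈ J, 0 < n)
    (B : ℕ → H →ₗ[K] H)
    -- the `B j` are 1-cocycles: `Δ(B_j y) = B_j y ⊗ 1 + (Id ⊗ B_j)(Δ y)`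
    (hB : ∀ j ∈ J, ∀ y : H, Coalgebra.comul (R := K) (B j y) =
      B j y ⊗ₜ[K] 1 + TensorProduct.map LinearMap.id (B j) (Coalgebra.comul (R := K) y))
    (x : ℕ → H) (hx0 : x 0 = 0)
    -- componentwise form of the Dyson–Schwinger equation
    (hx : ∀ n, 1 ≤ n → x n = (if n ∈ J then B n 1 else 0) +
      α • ∑ j ∈ (Finset.range (n + 1)).filter (fun j => j ∈ J ∧ m ∣ j), B j (x (n - j))) :
    (∀ n, 1 ≤ n → Coalgebra.comul (R := K) (x n) =
      x n ⊗ₜ[K] 1 + 1 ⊗ₜ[K] x n +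
        α • ∑ k ∈ (Finset.Ioo 0 n).filter (fun k => m ∣ k), x (n - k) ⊗ₜ[K] x k) ∧
    (∀ n, Coalgebra.comul (R := K) (x n) ∈
      LinearMap.range (TensorProduct.mapIncl
        (Subalgebra.toSubmodule (Algebra.adjoin K (Set.range x)))
        (Subalgebra.toSubmodule (Algebra.adjoin K (Set.range x))))) := by
  have hcomul := (IsDSESolution.of_one_le hJpos hx0 hx).comul_eq hB hJpos
  refine ⟨fun n _ => ?_, fun n => ?_⟩
  · rw [hcomul, sum_filter_Ioo_eq_sum_filter_range _ (by simp [hx0]) (by simp [hx0])]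
  · have hmem : ∀ k, x k ∈ Algebra.adjoin K (Set.range x) :=
      fun k => Algebra.subset_adjoin ⟨k, rfl⟩
    rw [hcomul]
    refine add_mem (add_mem ?_ ?_) (Submodule.smul_mem _ _ (sum_mem fun k _ => ?_))
    · exact tmul_mem_range_mapIncl (hmem n) (one_mem (Algebra.adjoin K (Set.range x)))
    · exact tmul_mem_range_mapIncl (one_mem (Algebra.adjoin K (Set.range x))) (hmem n)
    · exact tmul_mem_range_mapIncl (hmem _) (hmem k)

/-- Consider the Dyson–Schwinger equation
`x = Σ_{j∈J, m|j} B_j(1 + αx) + Σ_{j∈J, m∤j} B_j(1)`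
in (the completion of) the Connes–Kreimer Hopf algebra of rooted trees decorated by `J ⊆ ℕ*`
(abstracted here to any Hopf algebra `H` with 1-cocycles `B j`, `j ∈ J`, the solution given by
its family of homogeneous components `x n` satisfying the componentwise equation), where `m ≥ 1`
is such that the elements of `J` divisible by `m` generate `mℤ`.
Then `Δ(x(n)) = x(n)⊗1 + 1⊗x(n) + α Σ_{1≤k≤n−1, m|k} x(n−k)⊗x(k)`; in particular the
subalgebra generated by the `x(n)` is a Hopf subalgebra. -/
theorem DSE_solution_comul (K : Type*) [Field K] [CharZero K]
    (H : Type*) [CommRing H] [HopfAlgebra K H]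
    (α : K) (hα : α ≠ 0) (m : ℕ) (hm : 1 ≤ m)
    (J : Set ℕ) [DecidablePred (· ∈ J)]
    (hJpos : ∀ n ∈ J, 0 < n)
    (hgen : AddSubgroup.closure ((fun n : ℕ => (n : ℤ)) '' {n ∈ J | m ∣ n}) =
      AddSubgroup.zmultiples (m : ℤ))
    (B : ℕ → H →ₗ[K] H)
    -- the `B j` are 1-cocycles: `Δ(B_j y) = B_j y ⊗ 1 + (Id ⊗ B_j)(Δ y)`
    (hB : ∀ j ∈ J, ∀ y : H, Coalgebra.comul (R := K) (B j y) =
      B j y ⊗ₜ[K] 1 + TensorProduct.map LinearMap.id (B j) (Coalgebra.comul (R := K) y))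
    (x : ℕ → H) (hx0 : x 0 = 0)
    -- componentwise form of the Dyson–Schwinger equation
    (hx : ∀ n, 1 ≤ n → x n = (if n ∈ J then B n 1 else 0) +
      α • ∑ j ∈ (Finset.range (n + 1)).filter (fun j => j ∈ J ∧ m ∣ j), B j (x (n - j))) :
    (∀ n, 1 ≤ n → Coalgebra.comul (R := K) (x n) =
      x n ⊗ₜ[K] 1 + 1 ⊗ₜ[K] x n +
        α • ∑ k ∈ (Finset.Ioo 0 n).filter (fun k => m ∣ k), x (n - k) ⊗ₜ[K] x k) ∧
    (∀ n, Coalgebra.comul (R := K) (x n) ∈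
      LinearMap.range (TensorProduct.mapIncl
        (Subalgebra.toSubmodule (Algebra.adjoin K (Set.range x)))
        (Subalgebra.toSubmodule (Algebra.adjoin K (Set.range x))))) :=
  DSE_solution_comul_general K H α m J hJpos B hB x hx0 hx
end

section
/- For λ, μ ∈ K, the formal power series f^{(j)}(h) = (1 − μh)·Q(h)^j, where Q(h) = (1−μh)^{−λ/μ} if μ ≠ 0 and Q(h) = e^{λh} if μ = 0, has coefficients given by f^{(j)}(h) = Σ_{n≥0} (λj−μ)(λj)(λj+μ)⋯(λj+μ(n−2))/n! · h^n. -/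
open Classical

/-- `Q(h) = (1−μh)^{−λ/μ}` if `μ ≠ 0` (binomial formal power series) and `Q(h) = e^{λh}`
if `μ = 0`. -/
noncomputable def Qser (K : Type*) [Field K] [CharZero K] (lam mu : K) : PowerSeries K :=
  if mu = 0 then PowerSeries.rescale lam (PowerSeries.exp K)
  else PowerSeries.mk fun n =>
    (-mu) ^ n * (∏ i ∈ Finset.range n, (-lam / mu - (i : K))) / (n.factorial : K)

/-!
Every series in sight is characterised by the linear ODE `(1 - μX) f' = c f` together with
`f(0) = 1`: comparing coefficients, the ODE is the recursion
`(n + 1) fₙ₊₁ = (c + μn) fₙ`, whose solution is `fₙ = c(c + μ)⋯(c + μ(n - 1))/n!`.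
Solutions multiply (the constants `c` add), so `Q` solves it with `c = λ` and `Q^j` with
`c = λj`; multiplying by `1 - μX` then shifts the product by one factor.
-/

open Finset

namespace PowerSeries

section ODE

variable {R : Type*} [CommRing R]

theorem coeff_X_mul_derivative (f : R⟦X⟧) (n : ℕ) :
    coeff n (X * d⁄dX R f) = n * coeff n f := by
  cases n with
  | zero => simp
  | succ n => rw [coeff_succ_X_mul, coeff_derivative, mul_comm]; push_cast; ring

theorem one_sub_C_mul_X_mul_derivative_eq_iff (mu c : R) (f : R⟦X⟧) :
    (1 - C mu * X) * d⁄dX R f = C c * f ↔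
      ∀ n : ℕ, coeff (n + 1) f * (n + 1) = (c + mu * n) * coeff n f := by
  have hcoeff (n : ℕ) : coeff n ((1 - C mu * X) * d⁄dX R f - C c * f) =
      coeff (n + 1) f * (n + 1) - (c + mu * n) * coeff n f := by
    rw [sub_mul, one_mul, mul_assoc, map_sub, map_sub, coeff_C_mul, coeff_C_mul,
      coeff_X_mul_derivative, coeff_derivative]
    ring
  rw [← sub_eq_zero, PowerSeries.ext_iff]
  simp only [hcoeff, map_zero, sub_eq_zero]

theorem one_sub_C_mul_X_mul_derivative_mul {mu c d : R} {f g : R⟦X⟧}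
    (hf : (1 - C mu * X) * d⁄dX R f = C c * f) (hg : (1 - C mu * X) * d⁄dX R g = C d * g) :
    (1 - C mu * X) * d⁄dX R (f * g) = C (c + d) * (f * g) := by
  rw [Derivation.leibniz, smul_eq_mul, smul_eq_mul, map_add]
  linear_combination g * hf + f * hg

theorem one_sub_C_mul_X_mul_derivative_pow {mu c : R} {f : R⟦X⟧}
    (hf : (1 - C mu * X) * d⁄dX R f = C c * f) (j : ℕ) :
    (1 - C mu * X) * d⁄dX R (f ^ j) = C (c * j) * f ^ j := by
  induction j with
  | zero => simp
  | succ j ih =>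
    rw [pow_succ, one_sub_C_mul_X_mul_derivative_mul ih hf]
    push_cast
    ring_nf

theorem eq_of_one_sub_C_mul_X_mul_derivative_eq [IsAddTorsionFree R] {mu c : R} {f g : R⟦X⟧}
    (hf : (1 - C mu * X) * d⁄dX R f = C c * f) (hg : (1 - C mu * X) * d⁄dX R g = C c * g)
    (h0 : constantCoeff f = constantCoeff g) : f = g := by
  rw [one_sub_C_mul_X_mul_derivative_eq_iff] at hf hg
  ext n
  induction n with
  | zero => simpa using h0
  | succ n ih =>
    apply nsmul_right_injective n.succ_ne_zero
    simp only [nsmul_eq_mul, Nat.cast_succ, mul_comm _ (coeff _ _), hf, hg, ih]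

end ODE

section RisingSeries

variable {K : Type*} [Field K] [CharZero K]

/-- `(1 - μX)^{-c/μ}` for `μ ≠ 0` and `exp (cX)` for `μ = 0`. -/
noncomputable def risingSeries (mu c : K) : K⟦X⟧ :=
  mk fun n => (∏ i ∈ range n, (c + mu * i)) / n.factorial

omit [CharZero K] in
theorem constantCoeff_risingSeries (mu c : K) : constantCoeff (risingSeries mu c) = 1 := by
  simp [risingSeries, ← coeff_zero_eq_constantCoeff_apply]

theorem one_sub_C_mul_X_mul_derivative_risingSeries (mu c : K) :
    (1 - C mu * X) * d⁄dX K (risingSeries mu c) = C c * risingSeries mu c := by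
  rw [one_sub_C_mul_X_mul_derivative_eq_iff]
  intro n
  simp only [risingSeries, coeff_mk, prod_range_succ, Nat.factorial_succ]
  have : (n.factorial : K) ≠ 0 := Nat.cast_ne_zero.mpr n.factorial_ne_zero
  field_simp
  push_cast
  ring

theorem risingSeries_pow (mu c : K) (j : ℕ) :
    risingSeries mu c ^ j = risingSeries mu (c * j) :=
  eq_of_one_sub_C_mul_X_mul_derivative_eq
    (one_sub_C_mul_X_mul_derivative_pow (one_sub_C_mul_X_mul_derivative_risingSeries mu c) j)
    (one_sub_C_mul_X_mul_derivative_risingSeries mu (c * j))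
    (by simp [constantCoeff_risingSeries])

theorem one_sub_C_mul_X_mul_risingSeries (mu c : K) :
    (1 - C mu * X) * risingSeries mu c =
      mk fun n => (∏ k ∈ range n, (c + mu * ((k : K) - 1))) / n.factorial := by
  ext (_ | n)
  · simp [risingSeries]
  · have hshift : ∏ k ∈ range (n + 1), (c + mu * ((k : K) - 1)) =
        (∏ k ∈ range n, (c + mu * k)) * (c - mu) := by
      rw [prod_range_succ']
      simp only [Nat.cast_succ, add_sub_cancel_right, Nat.cast_zero, zero_sub]
      ring
    rw [sub_mul, one_mul, mul_assoc, map_sub, coeff_C_mul, coeff_succ_X_mul]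
    simp only [risingSeries, coeff_mk, hshift, prod_range_succ, Nat.factorial_succ]
    have : (n.factorial : K) ≠ 0 := Nat.cast_ne_zero.mpr n.factorial_ne_zero
    field_simp
    push_cast
    ring

end RisingSeries

end PowerSeries

open PowerSeries in
theorem Qser_eq_risingSeries {K : Type*} [Field K] [CharZero K] (lam mu : K) :
    Qser K lam mu = risingSeries mu lam := by
  ext n
  rw [Qser, risingSeries, coeff_mk]
  split_ifs with hmu
  · simp [hmu, coeff_exp, div_eq_mul_inv, mul_comm]
  · rw [coeff_mk, pow_eq_prod_const, ← prod_mul_distrib]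
    congr 1
    refine prod_congr rfl fun i _ => ?_
    field_simp
    ring

theorem coeff_one_sub_mul_Q_pow_general (K : Type*) [Field K] [CharZero K] (lam mu : K)
    (j : ℕ) :
    (1 - PowerSeries.C mu * PowerSeries.X) * (Qser K lam mu) ^ j =
      PowerSeries.mk fun n =>
        (∏ k ∈ Finset.range n, (lam * (j : K) + mu * ((k : K) - 1))) / (n.factorial : K) := by
  rw [Qser_eq_risingSeries, PowerSeries.risingSeries_pow,
    PowerSeries.one_sub_C_mul_X_mul_risingSeries]

/-- For `λ, μ ∈ K` and `j ≥ 1`, the formal power series `f^{(j)}(h) = (1 − μh)·Q(h)^j` has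
coefficients `f^{(j)}(h) = Σ_{n≥0} (λj−μ)(λj)(λj+μ)⋯(λj+μ(n−2))/n! · h^n`. -/
theorem coeff_one_sub_mul_Q_pow (K : Type*) [Field K] [CharZero K] (lam mu : K)
    (j : ℕ) (hj : 1 ≤ j) :
    (1 - PowerSeries.C mu * PowerSeries.X) * (Qser K lam mu) ^ j =
      PowerSeries.mk fun n =>
        (∏ k ∈ Finset.range n, (lam * (j : K) + mu * ((k : K) - 1))) / (n.factorial : K) :=
  coeff_one_sub_mul_Q_pow_general K lam mu j
end
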